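/- Let x ∈ ℝ^d be nonzero and let D₁, D₂ : Ω → {0,1}^d be random masks whose 2d coordinates are mutually independent, each Bernoulli(1/2). Then Var(IP(D₁ ⊙ x, D₂ ⊙ x)) = (3/16) · (∑_{i=1}^d xᵢ⁴) / ‖x‖₂⁴. -/

import Mathlib

open MeasureTheory ProbabilityTheory

noncomputable def hadamard {d : ℕ} (a : Fin d → ℝ) (x : EuclideanSpace ℝ (Fin d)) :
    EuclideanSpace ℝ (Fin d) :=
  WithLp.toLp 2 (fun i => a i * x i)

noncomputable def IP {d : ℕ} (x x₁ x₂ : EuclideanSpace ℝ (Fin d)) : ℝ :=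
  (inner ℝ x₁ x₂ : ℝ) / ‖x‖ ^ 2

/-!
Expanding the inner product, `IP(D₁ ⊙ x, D₂ ⊙ x) = ‖x‖⁻² ∑ᵢ xᵢ² D₁ᵢ D₂ᵢ`. The products
`D₁ᵢ D₂ᵢ` are pairwise independent `{0,1}`-valued variables with `ℙ(D₁ᵢ D₂ᵢ = 1) = 1/4`, so each
has variance `1/4 · 3/4 = 3/16`, and the variance of the weighted sum is `∑ᵢ xᵢ⁴ · 3/16`.
-/

section ZeroOne

variable {Ω : Type*} {X Y : Ω → ℝ}

lemma eq_indicator_of_zero_or_one (hX : ∀ ω, X ω = 0 ∨ X ω = 1) :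
    X = {ω | X ω = 1}.indicator 1 := by
  funext ω
  rcases hX ω with h | h <;> simp [Set.indicator, h]

lemma sq_eq_self_of_zero_or_one (hX : ∀ ω, X ω = 0 ∨ X ω = 1) : X ^ 2 = X := by
  funext ω
  rcases hX ω with h | h <;> simp [h]

variable [MeasurableSpace Ω] {μ : Measure Ω}

lemma memLp_of_zero_or_one [IsFiniteMeasure μ] (hXm : Measurable X)
    (hX : ∀ ω, X ω = 0 ∨ X ω = 1) (p : ENNReal) : MemLp X p μ :=
  memLp_of_bounded (a := 0) (b := 1)
    (Filter.Eventually.of_forall fun ω => by rcases hX ω with h | h <;> simp [h])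
    hXm.aestronglyMeasurable p

lemma integral_eq_measureReal_of_zero_or_one (hXm : Measurable X)
    (hX : ∀ ω, X ω = 0 ∨ X ω = 1) : μ[X] = μ.real {ω | X ω = 1} := by
  conv_lhs => rw [eq_indicator_of_zero_or_one hX]
  exact integral_indicator_one (hXm (measurableSet_singleton 1))

lemma variance_of_zero_or_one [IsProbabilityMeasure μ] (hXm : Measurable X)
    (hX : ∀ ω, X ω = 0 ∨ X ω = 1) :
    variance X μ = μ.real {ω | X ω = 1} * (1 - μ.real {ω | X ω = 1}) := by
  rw [variance_eq_sub (memLp_of_zero_or_one hXm hX 2), sq_eq_self_of_zero_or_one hX,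
    integral_eq_measureReal_of_zero_or_one hXm hX]
  ring

lemma ProbabilityTheory.IndepFun.measureReal_mul_eq_one_of_zero_or_one (hXY : X ⟂ᵢ[μ] Y)
    (hX : ∀ ω, X ω = 0 ∨ X ω = 1) (hY : ∀ ω, Y ω = 0 ∨ Y ω = 1) :
    μ.real {ω | X ω * Y ω = 1} = μ.real {ω | X ω = 1} * μ.real {ω | Y ω = 1} := by
  have hset : {ω | X ω * Y ω = 1} = X ⁻¹' {1} ∩ Y ⁻¹' {1} := by
    ext ω
    rcases hX ω with h | h <;> rcases hY ω with h' | h' <;> simp [h, h']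
  rw [hset, measureReal_def, hXY.measure_inter_preimage_eq_mul _ _ (measurableSet_singleton 1)
    (measurableSet_singleton 1), ENNReal.toReal_mul]
  rfl

end ZeroOne

lemma ProbabilityTheory.IndepFun.variance_fun_sum_const_mul {Ω ι : Type*} [MeasurableSpace Ω]
    {μ : Measure Ω} {X : ι → Ω → ℝ} {s : Finset ι} (c : ι → ℝ) (hs : ∀ i ∈ s, MemLp (X i) 2 μ)
    (h : Set.Pairwise s fun i j => X i ⟂ᵢ[μ] X j) :
    variance (fun ω => ∑ i ∈ s, c i * X i ω) μ = ∑ i ∈ s, c i ^ 2 * variance (X i) μ := by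
  have hsum : (fun ω => ∑ i ∈ s, c i * X i ω) = ∑ i ∈ s, fun ω => c i * X i ω := by
    funext ω; simp
  rw [hsum, IndepFun.variance_sum (fun i hi => (hs i hi).const_mul (c i))
    (h.mono' fun i j hij => hij.comp (measurable_const_mul (c i)) (measurable_const_mul (c j)))]
  exact Finset.sum_congr rfl fun i _ => variance_const_mul (c i) (X i) μ

lemma IP_hadamard {d : ℕ} (x : EuclideanSpace ℝ (Fin d)) (a b : Fin d → ℝ) :
    IP x (hadamard a x) (hadamard b x) = (‖x‖ ^ 2)⁻¹ * ∑ i, x i ^ 2 * (a i * b i) := by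
  simp only [IP, hadamard, PiLp.inner_apply, RCLike.inner_apply, conj_trivial]
  rw [div_eq_inv_mul]
  congr 1
  exact Finset.sum_congr rfl fun i _ => by ring

section Masks

variable {Ω ι : Type*} [MeasurableSpace Ω] {μ : Measure Ω} {D₁ D₂ : Ω → ι → ℝ}

lemma indepFun_masks_apply
    (hindep : iIndepFun (fun (p : Fin 2 × ι) ω => if p.1 = 0 then D₁ ω p.2 else D₂ ω p.2) μ)
    (i : ι) : (fun ω => D₁ ω i) ⟂ᵢ[μ] (fun ω => D₂ ω i) :=
  hindep.indepFun (i := (0, i)) (j := (1, i)) (by simp)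

lemma indepFun_masks_mul_apply
    (hmeas : ∀ i, Measurable (fun ω => D₁ ω i) ∧ Measurable (fun ω => D₂ ω i))
    (hindep : iIndepFun (fun (p : Fin 2 × ι) ω => if p.1 = 0 then D₁ ω p.2 else D₂ ω p.2) μ)
    {i j : ι} (hij : i ≠ j) :
    (fun ω => D₁ ω i * D₂ ω i) ⟂ᵢ[μ] (fun ω => D₁ ω j * D₂ ω j) := by
  have hmeas' : ∀ p : Fin 2 × ι, Measurable fun ω => if p.1 = 0 then D₁ ω p.2 else D₂ ω p.2 := by
    rintro ⟨a, k⟩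
    fin_cases a
    exacts [(hmeas k).1, (hmeas k).2]
  exact hindep.indepFun_mul_mul hmeas' (0, i) (1, i) (0, j) (1, j)
    (by simp [hij]) (by simp) (by simp) (by simp [hij])

end Masks

theorem random_masks_variance_IP_general {d : ℕ}
    (x : EuclideanSpace ℝ (Fin d))
    {Ω : Type*} [MeasureSpace Ω] [IsProbabilityMeasure (ℙ : Measure Ω)]
    (D₁ D₂ : Ω → Fin d → ℝ)
    (hbin : ∀ ω i, (D₁ ω i = 0 ∨ D₁ ω i = 1) ∧ (D₂ ω i = 0 ∨ D₂ ω i = 1))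
    (hmeas : ∀ i, Measurable (fun ω => D₁ ω i) ∧ Measurable (fun ω => D₂ ω i))
    (hindep : iIndepFun
      (fun (p : Fin 2 × Fin d) ω => if p.1 = 0 then D₁ ω p.2 else D₂ ω p.2) ℙ)
    (hber : ∀ i, ℙ {ω | D₁ ω i = 1} = 1/2 ∧ ℙ {ω | D₂ ω i = 1} = 1/2) :
    variance (fun ω => IP x (hadamard (D₁ ω) x) (hadamard (D₂ ω) x)) ℙ
      = (3/16) * (∑ i, (x i) ^ 4) / ‖x‖ ^ 4 := by
  set Z : Fin d → Ω → ℝ := fun i ω => D₁ ω i * D₂ ω i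
  have hZ01 : ∀ i ω, Z i ω = 0 ∨ Z i ω = 1 := fun i ω => by
    rcases (hbin ω i).1 with h | h <;> simp [Z, h, (hbin ω i).2]
  have hZmeas : ∀ i, Measurable (Z i) := fun i => (hmeas i).1.mul (hmeas i).2
  have hZprob : ∀ i, (ℙ : Measure Ω).real {ω | Z i ω = 1} = 1 / 4 := fun i => by
    rw [(indepFun_masks_apply hindep i).measureReal_mul_eq_one_of_zero_or_one
      (fun ω => (hbin ω i).1) (fun ω => (hbin ω i).2), measureReal_def, measureReal_def,
      (hber i).1, (hber i).2]
    norm_num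
  have hZvar : ∀ i, variance (Z i) ℙ = 3 / 16 := fun i => by
    rw [variance_of_zero_or_one (hZmeas i) (hZ01 i), hZprob]
    norm_num
  simp only [IP_hadamard]
  rw [variance_const_mul, IndepFun.variance_fun_sum_const_mul (X := Z) _
    (fun i _ => memLp_of_zero_or_one (hZmeas i) (hZ01 i) 2)
    (fun i _ j _ hij => indepFun_masks_mul_apply hmeas hindep hij)]
  simp only [hZvar, ← Finset.sum_mul, ← pow_mul]
  ring

/-- For nonzero `x ∈ ℝ^d` and random masks `D₁, D₂ : Ω → {0,1}^d` whose `2d`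
coordinates are mutually independent, each Bernoulli(1/2),
`Var(IP(D₁ ⊙ x, D₂ ⊙ x)) = (3/16) (∑ᵢ xᵢ⁴) / ‖x‖⁴`. -/
theorem random_masks_variance_IP {d : ℕ}
    (x : EuclideanSpace ℝ (Fin d)) (hx : x ≠ 0)
    {Ω : Type*} [MeasureSpace Ω] [IsProbabilityMeasure (ℙ : Measure Ω)]
    (D₁ D₂ : Ω → Fin d → ℝ)
    (hbin : ∀ ω i, (D₁ ω i = 0 ∨ D₁ ω i = 1) ∧ (D₂ ω i = 0 ∨ D₂ ω i = 1))
    (hmeas : ∀ i, Measurable (fun ω => D₁ ω i) ∧ Measurable (fun ω => D₂ ω i))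
    (hindep : iIndepFun
      (fun (p : Fin 2 × Fin d) ω => if p.1 = 0 then D₁ ω p.2 else D₂ ω p.2) ℙ)
    (hber : ∀ i, ℙ {ω | D₁ ω i = 1} = 1/2 ∧ ℙ {ω | D₂ ω i = 1} = 1/2) :
    variance (fun ω => IP x (hadamard (D₁ ω) x) (hadamard (D₂ ω) x)) ℙ
      = (3/16) * (∑ i, (x i) ^ 4) / ‖x‖ ^ 4 :=
  random_masks_variance_IP_general x D₁ D₂ hbin hmeas hindep hber
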